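/- arXiv:1606.04647 — 3 statements merged into one kernel-verified Lean document; each statement's English description precedes it below -/
import Mathlib

section
/- Let V be a δ-GAS Lyapunov function for f with class-𝒦∞ functions α̲, ᾱ, ρ and bounding function σ, and assume the map s ↦ s − ρ(s) is nondecreasing on [0,∞). Let μ > 0 and let η be a vector of positive quantization parameters satisfying σ(‖η‖) ≤ ρ(α̲(μ)) and ᾱ(‖η‖) ≤ α̲(μ), where ‖η‖ = max_i η(i). Define the relation R_μ ⊆ ℝⁿ × ℝⁿ by (x,ξ) ∈ R_μ ⇔ V(x,ξ) ≤ α̲(μ). Then: (a) for every x ∈ ℝⁿ, (x, [x]_η) ∈ R_μ; (b) for every (x,ξ) ∈ R_μ, ‖x − ξ‖ ≤ μ; (c) for every (x,ξ) ∈ R_μ and every u ∈ U, (f(x,u), [f(ξ,u)]_η) ∈ R_μ. -/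
/-!
The relation `V x ξ ≤ α₁ μ` is a sublevel set of the incremental Lyapunov function.
Quantizing moves a point by at most `‖η‖ / 2`, which the upper bound `α₂` turns into (a);
the lower bound `α₁` gives (b). For (c), one step of the dynamics takes `V x ξ ≤ α₁ μ`
to `V (f x u) (f ξ u) ≤ α₁ μ - ρ (α₁ μ)`, because `s ↦ s - ρ s` is nondecreasing, and
quantizing `f ξ u` costs at most `σ ‖η‖ ≤ ρ (α₁ μ)` of the margin so gained.
-/

open Filter

/-- A class-𝒦∞ function: continuous, strictly increasing on `[0,∞)`, vanishing
at `0`, tending to `∞`, and mapping `[0,∞)` into `[0,∞)`. -/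
def IsKInf (g : ℝ → ℝ) : Prop :=
  ContinuousOn g (Set.Ici 0) ∧ StrictMonoOn g (Set.Ici 0) ∧ g 0 = 0 ∧
    Tendsto g atTop atTop ∧ ∀ s, 0 ≤ s → 0 ≤ g s

/-- Scalar quantizer: `quant θ z` is the unique integer multiple `q` of `θ`
with `z ∈ [q - θ/2, q + θ/2)`. -/
noncomputable def quant (θ z : ℝ) : ℝ := θ * round (z / θ)

/-- Coordinatewise quantizer with quantization vector `η`. -/
noncomputable def quantVec {n : ℕ} (η : Fin n → ℝ) (z : Fin n → ℝ) : Fin n → ℝ :=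
  fun i => quant (η i) (z i)

theorem IsKInf.strictMonoOn {g : ℝ → ℝ} (hg : IsKInf g) : StrictMonoOn g (Set.Ici 0) :=
  hg.2.1

theorem IsKInf.monotoneOn {g : ℝ → ℝ} (hg : IsKInf g) : MonotoneOn g (Set.Ici 0) :=
  hg.strictMonoOn.monotoneOn

theorem abs_sub_quant_le {θ : ℝ} (hθ : θ ≠ 0) (z : ℝ) : |z - quant θ z| ≤ |θ| / 2 := by
  have h : z - quant θ z = θ * (z / θ - round (z / θ)) := by
    unfold quant
    field_simp
  calc |z - quant θ z| = |θ| * |z / θ - round (z / θ)| := by rw [h, abs_mul]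
    _ ≤ |θ| * (1 / 2) := by gcongr; exact abs_sub_round _
    _ = |θ| / 2 := by ring

theorem norm_sub_quantVec_le {n : ℕ} {η : Fin n → ℝ} (hη : ∀ i, η i ≠ 0) (z : Fin n → ℝ) :
    ‖z - quantVec η z‖ ≤ ‖η‖ / 2 := by
  refine (pi_norm_le_iff_of_nonneg (by positivity)).2 fun i => ?_
  calc ‖(z - quantVec η z) i‖ = |z i - quant (η i) (z i)| := rfl
    _ ≤ |η i| / 2 := abs_sub_quant_le (hη i) (z i)
    _ ≤ ‖η‖ / 2 := by gcongr; exact norm_le_pi_norm η i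

theorem le_sub_of_lyapunov_decrease {X U : Type*} {f : X → U → X} {V : X → X → ℝ}
    {ρ : ℝ → ℝ} (hVdec : ∀ x x' u, V (f x u) (f x' u) - V x x' ≤ -ρ (V x x'))
    (hmono : MonotoneOn (fun s => s - ρ s) (Set.Ici 0)) {x ξ : X} {c : ℝ}
    (hV0 : 0 ≤ V x ξ) (hc : V x ξ ≤ c) (u : U) :
    V (f x u) (f ξ u) ≤ c - ρ c :=
  calc V (f x u) (f ξ u) ≤ V x ξ - ρ (V x ξ) := by linarith [hVdec x ξ u]
    _ ≤ c - ρ c := hmono hV0 (hV0.trans hc) hc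

theorem stmt_0_general {n : ℕ} {U : Type*}
    (f : (Fin n → ℝ) → U → (Fin n → ℝ))
    (V : (Fin n → ℝ) → (Fin n → ℝ) → ℝ)
    (α₁ α₂ ρ σ : ℝ → ℝ)
    (hα₁ : IsKInf α₁) (hα₂ : IsKInf α₂) (hσ : IsKInf σ)
    (hV0 : ∀ x x', 0 ≤ V x x')
    (hVlow : ∀ x x', α₁ ‖x - x'‖ ≤ V x x')
    (hVup : ∀ x x', V x x' ≤ α₂ ‖x - x'‖)
    (hVdec : ∀ x x' u, V (f x u) (f x' u) - V x x' ≤ -ρ (V x x'))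
    (hσbound : ∀ x y z, |V x y - V x z| ≤ σ ‖y - z‖)
    (hmono : MonotoneOn (fun s => s - ρ s) (Set.Ici 0))
    (μ : ℝ) (hμ : 0 < μ)
    (η : Fin n → ℝ) (hη : ∀ i, 0 < η i)
    (hη1 : σ ‖η‖ ≤ ρ (α₁ μ)) (hη2 : α₂ ‖η‖ ≤ α₁ μ) :
    (∀ x, V x (quantVec η x) ≤ α₁ μ) ∧
    (∀ x ξ, V x ξ ≤ α₁ μ → ‖x - ξ‖ ≤ μ) ∧
    (∀ x ξ, V x ξ ≤ α₁ μ → ∀ u, V (f x u) (quantVec η (f ξ u)) ≤ α₁ μ) := by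
  have hquant (z : Fin n → ℝ) : ‖z - quantVec η z‖ ≤ ‖η‖ :=
    (norm_sub_quantVec_le (fun i => (hη i).ne') z).trans (half_le_self (norm_nonneg η))
  refine ⟨fun x => ?_, fun x ξ hxξ => ?_, fun x ξ hxξ u => ?_⟩
  · calc V x (quantVec η x) ≤ α₂ ‖x - quantVec η x‖ := hVup _ _
      _ ≤ α₂ ‖η‖ := hα₂.monotoneOn (norm_nonneg _) (norm_nonneg _) (hquant x)
      _ ≤ α₁ μ := hη2
  · exact (hα₁.strictMonoOn.le_iff_le (norm_nonneg _) hμ.le).1 ((hVlow x ξ).trans hxξ)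
  · set q := quantVec η (f ξ u)
    have hσq : σ ‖q - f ξ u‖ ≤ σ ‖η‖ :=
      hσ.monotoneOn (norm_nonneg _) (norm_nonneg _) (norm_sub_rev q _ ▸ hquant (f ξ u))
    calc V (f x u) q ≤ V (f x u) (f ξ u) + σ ‖q - f ξ u‖ := by
          linarith [(abs_sub_le_iff.1 (hσbound (f x u) q (f ξ u))).1]
      _ ≤ (α₁ μ - ρ (α₁ μ)) + σ ‖η‖ := by
          gcongr
          exact le_sub_of_lyapunov_decrease hVdec hmono (hV0 x ξ) hxξ u
      _ ≤ α₁ μ := by linarith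

theorem stmt_0 {n : ℕ} {U : Type*} [Nonempty U]
    (f : (Fin n → ℝ) → U → (Fin n → ℝ))
    (V : (Fin n → ℝ) → (Fin n → ℝ) → ℝ)
    (α₁ α₂ ρ σ : ℝ → ℝ)
    (hα₁ : IsKInf α₁) (hα₂ : IsKInf α₂) (hρ : IsKInf ρ) (hσ : IsKInf σ)
    (hV0 : ∀ x x', 0 ≤ V x x')
    (hVlow : ∀ x x', α₁ ‖x - x'‖ ≤ V x x')
    (hVup : ∀ x x', V x x' ≤ α₂ ‖x - x'‖)
    (hVdec : ∀ x x' u, V (f x u) (f x' u) - V x x' ≤ -ρ (V x x'))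
    (hσbound : ∀ x y z, |V x y - V x z| ≤ σ ‖y - z‖)
    (hmono : MonotoneOn (fun s => s - ρ s) (Set.Ici 0))
    (μ : ℝ) (hμ : 0 < μ)
    (η : Fin n → ℝ) (hη : ∀ i, 0 < η i)
    (hη1 : σ ‖η‖ ≤ ρ (α₁ μ)) (hη2 : α₂ ‖η‖ ≤ α₁ μ) :
    (∀ x, V x (quantVec η x) ≤ α₁ μ) ∧
    (∀ x ξ, V x ξ ≤ α₁ μ → ‖x - ξ‖ ≤ μ) ∧
    (∀ x ξ, V x ξ ≤ α₁ μ → ∀ u, V (f x u) (quantVec η (f ξ u)) ≤ α₁ μ) :=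
  stmt_0_general f V α₁ α₂ ρ σ hα₁ hα₂ hσ hV0 hVlow hVup hVdec hσbound hmono μ hμ η hη hη1 hη2
end

section
/- For the circular thermal network map f, if every control value satisfies u(i) ∈ [0,1], then for all temperature vectors x, x' : ZMod N → ℝ and every coordinate i, |f(x,u)(i) − f(x',u)(i)| ≤ A · max_j |x(j) − x'(j)|, where A = max{|1 − 2α − β − γ|, |1 − 2α − β|} + 2α; equivalently, ‖f(x,u) − f(x',u)‖ ≤ A‖x − x'‖ in the sup norm. -/
/-- The circular thermal network map: room `i` interacts with rooms `i+1` and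
`i-1` (cyclically), with the external environment at temperature `Te`, and with
its heater at temperature `Th` driven by the control `u i`. -/
def thermal (N : ℕ) (α β γ Te Th : ℝ) (x u : ZMod N → ℝ) : ZMod N → ℝ :=
  fun i => x i + α * (x (i + 1) + x (i - 1) - 2 * x i)
    + β * (Te - x i) + γ * (Th - x i) * u i

/-! For fixed control the map is affine in `x`, so the difference of two images is the linear
part applied to `x - x'`; its `i`-th row has diagonal entry `1 - 2α - β - γ u i`, which for
`u i ∈ [0, 1]` lies between `1 - 2α - β - γ` and `1 - 2α - β`, and two off-diagonal entries `α`.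
The sup-norm bound is then the maximal absolute row sum. -/

theorem thermal_sub_thermal (N : ℕ) (α β γ Te Th : ℝ) (x x' u : ZMod N → ℝ) (i : ZMod N) :
    thermal N α β γ Te Th x u i - thermal N α β γ Te Th x' u i
      = (1 - 2 * α - β - γ * u i) * (x - x') i
        + α * (x - x') (i + 1) + α * (x - x') (i - 1) := by
  simp only [thermal, Pi.sub_apply]
  ring

theorem abs_sub_mul_le_max_abs {c γ t : ℝ} (hγ : 0 ≤ γ) (ht : t ∈ Set.Icc (0 : ℝ) 1) :
    |c - γ * t| ≤ max |c - γ| |c| :=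
  abs_le_max_abs_abs (by nlinarith [ht.2]) (by nlinarith [ht.1])

theorem abs_thermal_sub_thermal_le (N : ℕ) [NeZero N] (α β γ Te Th : ℝ)
    (hα : 0 ≤ α) (hγ : 0 ≤ γ) (x x' u : ZMod N → ℝ) (i : ZMod N)
    (hui : u i ∈ Set.Icc (0 : ℝ) 1) :
    |thermal N α β γ Te Th x u i - thermal N α β γ Te Th x' u i|
      ≤ (max |1 - 2 * α - β - γ| |1 - 2 * α - β| + 2 * α) * ‖x - x'‖ := by
  have hcoord (j : ZMod N) : |(x - x') j| ≤ ‖x - x'‖ := by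
    simpa only [Real.norm_eq_abs] using norm_le_pi_norm (x - x') j
  have hdiag := abs_sub_mul_le_max_abs (c := 1 - 2 * α - β) hγ hui
  rw [thermal_sub_thermal]
  calc |(1 - 2 * α - β - γ * u i) * (x - x') i + α * (x - x') (i + 1) + α * (x - x') (i - 1)|
      ≤ |1 - 2 * α - β - γ * u i| * |(x - x') i|
          + α * |(x - x') (i + 1)| + α * |(x - x') (i - 1)| := by
        refine (abs_add_three _ _ _).trans_eq ?_
        simp only [abs_mul, abs_of_nonneg hα]
    _ ≤ max |1 - 2 * α - β - γ| |1 - 2 * α - β| * ‖x - x'‖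
          + α * ‖x - x'‖ + α * ‖x - x'‖ := by
        gcongr <;> exact hcoord _
    _ = (max |1 - 2 * α - β - γ| |1 - 2 * α - β| + 2 * α) * ‖x - x'‖ := by ring

theorem stmt_6_general (N : ℕ) [NeZero N]
    (α β γ Te Th : ℝ) (hα : 0 < α) (hγ : 0 < γ)
    (A : ℝ) (hA : A = max |1 - 2 * α - β - γ| |1 - 2 * α - β| + 2 * α)
    (u : ZMod N → ℝ) (hu : ∀ i, u i ∈ Set.Icc (0 : ℝ) 1)
    (x x' : ZMod N → ℝ) :
    (∀ i, |thermal N α β γ Te Th x u i - thermal N α β γ Te Th x' u i|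
        ≤ A * ‖x - x'‖) ∧
    ‖thermal N α β γ Te Th x u - thermal N α β γ Te Th x' u‖ ≤ A * ‖x - x'‖ := by
  subst hA
  have hcoord i := abs_thermal_sub_thermal_le N α β γ Te Th hα.le hγ.le x x' u i (hu i)
  refine ⟨hcoord, (pi_norm_le_iff_of_nonneg (by positivity)).2 fun i => ?_⟩
  simpa only [Pi.sub_apply, Real.norm_eq_abs] using hcoord i

theorem stmt_6 (N : ℕ) [NeZero N] (hN : 3 ≤ N)
    (α β γ Te Th : ℝ) (hα : 0 < α) (hβ : 0 < β) (hγ : 0 < γ)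
    (A : ℝ) (hA : A = max |1 - 2 * α - β - γ| |1 - 2 * α - β| + 2 * α)
    (u : ZMod N → ℝ) (hu : ∀ i, u i ∈ Set.Icc (0 : ℝ) 1)
    (x x' : ZMod N → ℝ) :
    (∀ i, |thermal N α β γ Te Th x u i - thermal N α β γ Te Th x' u i|
        ≤ A * ‖x - x'‖) ∧
    ‖thermal N α β γ Te Th x u - thermal N α β γ Te Th x' u‖ ≤ A * ‖x - x'‖ :=
  stmt_6_general N α β γ Te Th hα hγ A hA u hu x x'
end

section
/- Let r be a relation on a type S (the transition relation), and let X₀ ⊆ S (initial states) and X_m ⊆ S (marked states). Define Reach = {x : ∃ x₀ ∈ X₀, x is reachable from x₀ via the reflexive-transitive closure of r} and CoReach = {x : ∃ x_m ∈ X_m, x_m is reachable from x via the reflexive-transitive closure of r}. Then for every x ∈ S, x ∈ Reach ∩ CoReach if and only if there exists x₀ ∈ X₀ ∩ CoReach such that x is reachable from x₀ via the reflexive-transitive closure of the restricted relation r' given by r'(a,b) ⇔ (r(a,b) ∧ a ∈ CoReach ∧ b ∈ CoReach). In other words, the state set of Ac(CoAc(S)) equals Reach ∩ CoReach. -/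
/-! The co-reachable set is closed under predecessors, so every state on an `r`-path ending in a
co-reachable state is itself co-reachable: the path survives the restriction of `r` to
co-reachable states. Conversely a restricted path is an `r`-path that stays co-reachable. -/

namespace Relation.ReflTransGen

variable {α : Type*} {r : α → α → Prop} {C : Set α} {a b : α}

theorem mem_of_pred_closed (hC : ∀ ⦃a b⦄, r a b → b ∈ C → a ∈ C) (h : ReflTransGen r a b)
    (hb : b ∈ C) : a ∈ C := by
  induction h using head_induction_on with
  | refl => exact hb
  | head hac _ ih => exact hC hac ih

theorem restrict_of_pred_closed (hC : ∀ ⦃a b⦄, r a b → b ∈ C → a ∈ C)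
    (h : ReflTransGen r a b) (hb : b ∈ C) :
    ReflTransGen (fun a b => r a b ∧ a ∈ C ∧ b ∈ C) a b := by
  induction h using head_induction_on with
  | refl => exact .refl
  | head hac hcb ih => exact .head ⟨hac, mem_of_pred_closed hC (.head hac hcb) hb,
      mem_of_pred_closed hC hcb hb⟩ ih

theorem mem_of_restrict (h : ReflTransGen (fun a b => r a b ∧ a ∈ C ∧ b ∈ C) a b)
    (ha : a ∈ C) : b ∈ C := by
  induction h with
  | refl => exact ha
  | tail _ hcb _ => exact hcb.2.2

end Relation.ReflTransGen

theorem stmt_12 {S : Type*} (r : S → S → Prop) (X₀ Xm : Set S)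
    (Reach : Set S) (hReach : Reach = {x | ∃ x₀ ∈ X₀, Relation.ReflTransGen r x₀ x})
    (CoReach : Set S)
    (hCoReach : CoReach = {x | ∃ xm ∈ Xm, Relation.ReflTransGen r x xm}) :
    ∀ x : S, x ∈ Reach ∩ CoReach ↔
      ∃ x₀ ∈ X₀ ∩ CoReach,
        Relation.ReflTransGen (fun a b => r a b ∧ a ∈ CoReach ∧ b ∈ CoReach) x₀ x := by
  subst hReach hCoReach
  have hpred : ∀ ⦃a b⦄, r a b → b ∈ {x | ∃ xm ∈ Xm, Relation.ReflTransGen r x xm} →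
      a ∈ {x | ∃ xm ∈ Xm, Relation.ReflTransGen r x xm} :=
    fun _ _ hab ⟨xm, hxm, hb⟩ => ⟨xm, hxm, .head hab hb⟩
  intro x
  constructor
  · rintro ⟨⟨x₀, hx₀, hpath⟩, hx⟩
    exact ⟨x₀, ⟨hx₀, hpath.mem_of_pred_closed hpred hx⟩, hpath.restrict_of_pred_closed hpred hx⟩
  · rintro ⟨x₀, ⟨hx₀, hx₀co⟩, hpath⟩
    exact ⟨⟨x₀, hx₀, Relation.ReflTransGen.mono (fun _ _ h => h.1) _ _ hpath⟩, hpath.mem_of_restrict hx₀co⟩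
end
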